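/- arXiv:1810.11904 — 3 statements merged into one kernel-verified Lean document; each statement's English description precedes it below -/
import Mathlib

section
/- Let $\theta > 0$. There exists a constant $A(\theta)$ such that for all integers $1 \le i \le n$, $\prod_{j=0}^{i-1} \frac{n-j}{\theta + n - j - 1} \le A(\theta) \left(\frac{\theta + n - 1}{\theta + n - i}\right)^{1-\theta}$. -/
/-!
Write the `j`-th factor as `1 + (1 - θ) / x` with `x = θ + n - j - 1`. Bernoulli's inequality
for a nonpositive exponent bounds it by `((x + 1) / x) ^ (1 - θ)` when `θ ≥ 1` and by
`(x / (x - 1)) ^ (1 - θ)` when `θ ≤ 1` and `x > 1`; in both cases the bounds telescope. For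
`θ < 1` the last factor has `x = θ + n - i`, possibly `< 1`, and is bounded by `1 / θ` instead.
-/

open Finset

lemma one_add_mul_le_rpow_one_add_of_nonpos {s p : ℝ} (hs : -1 < s) (hp : p ≤ 0) :
    1 + p * s ≤ (1 + s) ^ p := by
  have hs' : 0 < 1 + s := by linarith
  have hlog : Real.log (1 + s) ≤ s := by linarith [Real.log_le_sub_one_of_pos hs']
  calc 1 + p * s ≤ Real.log (1 + s) * p + 1 := by nlinarith
    _ ≤ Real.exp (Real.log (1 + s) * p) := Real.add_one_le_exp _
    _ = (1 + s) ^ p := (Real.rpow_def_of_pos hs' p).symm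

lemma one_add_div_le_rpow_succ_div {x t : ℝ} (hx : 0 < x) (ht : t ≤ 0) :
    1 + t / x ≤ ((x + 1) / x) ^ t := by
  have h := one_add_mul_le_rpow_one_add_of_nonpos (s := 1 / x)
    (by linarith [one_div_pos.mpr hx]) ht
  rwa [mul_one_div, add_comm 1 (1 / x), div_add_one hx.ne', add_comm 1 x] at h

lemma one_add_div_le_rpow_div_pred {x t : ℝ} (hx : 1 < x) (ht : 0 ≤ t) :
    1 + t / x ≤ (x / (x - 1)) ^ t := by
  have hx0 : 0 < x := by linarith
  have h := one_add_mul_le_rpow_one_add_of_nonpos (s := -(1 / x))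
    (by rw [neg_lt_neg_iff, div_lt_one hx0]; exact hx) (neg_nonpos.mpr ht)
  have hrw : 1 + -(1 / x) = (x / (x - 1))⁻¹ := by field_simp; ring
  rwa [neg_mul_neg, mul_one_div, hrw, Real.inv_rpow (by positivity),
    Real.rpow_neg (by positivity), inv_inv] at h

lemma prod_range_le_rpow_div {f a : ℕ → ℝ} {t : ℝ} {i : ℕ} (ha : ∀ j ≤ i, 0 < a j)
    (hf0 : ∀ j < i, 0 ≤ f j) (hf : ∀ j < i, f j ≤ (a j / a (j + 1)) ^ t) :
    ∏ j ∈ range i, f j ≤ (a 0 / a i) ^ t := by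
  induction i with
  | zero => simp [div_self (ha 0 le_rfl).ne']
  | succ i ih =>
    have ha0 := ha 0 (by omega)
    have hai := ha i (by omega)
    have hai' := ha (i + 1) le_rfl
    rw [prod_range_succ]
    calc (∏ j ∈ range i, f j) * f i
        ≤ (a 0 / a i) ^ t * (a i / a (i + 1)) ^ t :=
          mul_le_mul (ih (fun j hj => ha j (by omega)) (fun j hj => hf0 j (by omega))
            (fun j hj => hf j (by omega))) (hf i (by omega)) (hf0 i (by omega))
            (by positivity)
      _ = (a 0 / a (i + 1)) ^ t := by
          rw [← Real.mul_rpow (by positivity) (by positivity), div_mul_div_cancel₀ hai.ne']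

section

variable {θ : ℝ} {n : ℕ}

lemma factor_eq_one_add_div {j : ℝ} (hj : θ + n - j - 1 ≠ 0) :
    ((n : ℝ) - j) / (θ + n - j - 1) = 1 + (1 - θ) / (θ + n - j - 1) := by
  field_simp
  ring

lemma prod_factor_le_of_one_le (hθ : 1 ≤ θ) {i : ℕ} (hi : i ≤ n) :
    ∏ j ∈ range i, ((n : ℝ) - j) / (θ + n - j - 1) ≤ ((θ + n) / (θ + n - i)) ^ (1 - θ) := by
  have hi' : (i : ℝ) ≤ n := by exact_mod_cast hi
  have key := prod_range_le_rpow_div (f := fun j : ℕ => ((n : ℝ) - j) / (θ + n - j - 1))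
    (a := fun j : ℕ => θ + n - j) (t := 1 - θ) (i := i) (fun j hj => ?_) (fun j hj => ?_)
    (fun j hj => ?_)
  · rwa [Nat.cast_zero, sub_zero] at key
  · have : (j : ℝ) ≤ n := by exact_mod_cast hj.trans hi
    linarith
  all_goals have hj' : (j : ℝ) + 1 ≤ n := by exact_mod_cast (show j + 1 ≤ n by omega)
  · exact div_nonneg (by linarith) (by linarith)
  · rw [factor_eq_one_add_div (by linarith)]
    have h := one_add_div_le_rpow_succ_div (x := θ + n - j - 1) (t := 1 - θ) (by linarith)
      (by linarith)
    convert h using 3 <;> push_cast <;> ring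

lemma prod_factor_le_of_le_one (hθ0 : 0 < θ) (hθ : θ ≤ 1) {k : ℕ} (hk : k + 1 ≤ n) :
    ∏ j ∈ range k, ((n : ℝ) - j) / (θ + n - j - 1) ≤
      ((θ + n - 1) / (θ + n - k - 1)) ^ (1 - θ) := by
  have key := prod_range_le_rpow_div (f := fun j : ℕ => ((n : ℝ) - j) / (θ + n - j - 1))
    (a := fun j : ℕ => θ + n - j - 1) (t := 1 - θ) (i := k) (fun j hj => ?_) (fun j hj => ?_)
    (fun j hj => ?_)
  · rwa [Nat.cast_zero, sub_zero] at key
  · have : (j : ℝ) + 1 ≤ n := by exact_mod_cast (show j + 1 ≤ n by omega)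
    linarith
  all_goals have hj' : (j : ℝ) + 2 ≤ n := by exact_mod_cast (show j + 2 ≤ n by omega)
  · exact div_nonneg (by linarith) (by linarith)
  · rw [factor_eq_one_add_div (by linarith)]
    have h := one_add_div_le_rpow_div_pred (x := θ + n - j - 1) (t := 1 - θ) (by linarith)
      (by linarith)
    convert h using 3
    push_cast
    ring

lemma factor_le_inv (hθ0 : 0 < θ) (hθ : θ ≤ 1) {k : ℕ} (hk : k + 1 ≤ n) :
    ((n : ℝ) - k) / (θ + n - k - 1) ≤ θ⁻¹ := by
  have hk' : (k : ℝ) + 1 ≤ n := by exact_mod_cast hk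
  rw [div_le_iff₀ (by linarith), inv_mul_eq_div, le_div_iff₀ hθ0]
  nlinarith

end

theorem stmt_4 (θ : ℝ) (hθ : 0 < θ) :
    ∃ A : ℝ, ∀ n i : ℕ, 1 ≤ i → i ≤ n →
      ∏ j ∈ Finset.range i, ((n : ℝ) - j) / (θ + n - j - 1) ≤
        A * ((θ + n - 1) / (θ + n - i)) ^ (1 - θ) := by
  rcases le_total 1 θ with hθ1 | hθ1
  · refine ⟨1, fun n i h1 hi => ?_⟩
    have hin : (i : ℝ) ≤ n := by exact_mod_cast hi
    have hn : (1 : ℝ) ≤ n := by exact_mod_cast h1.trans hi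
    rw [one_mul]
    refine (prod_factor_le_of_one_le hθ1 hi).trans ?_
    exact Real.rpow_le_rpow_of_nonpos (div_pos (by linarith) (by linarith))
      (by gcongr <;> linarith) (by linarith)
  · refine ⟨θ⁻¹, fun n i h1 hi => ?_⟩
    obtain ⟨k, rfl⟩ : ∃ k, i = k + 1 := ⟨i - 1, by omega⟩
    have hk : (k : ℝ) + 1 ≤ n := by exact_mod_cast hi
    rw [prod_range_succ, Nat.cast_succ, ← sub_sub, mul_comm θ⁻¹]
    exact mul_le_mul (prod_factor_le_of_le_one hθ hθ1 hi) (factor_le_inv hθ hθ1 hi)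
      (div_nonneg (by linarith) (by linarith))
      (Real.rpow_nonneg (div_nonneg (by linarith) (by linarith)) _)
end

section
/- For integers $k_1, k_2 \ge 2$ and $n \ge 2$, the sum $\sum_{1 \le i < j \le n} i^{k_1 - 2} j^{k_2 - 2} \gcd(i,j) \le \sum_{i=1}^n \sum_{j=i}^n n^{k_1 + k_2 - 2} \frac{i^{k_1-2}}{j^{k_1}}$; in particular $\sum_{1 \le i < j \le n} i^{k_1-2} j^{k_2-2} \gcd(i,j) = O(n^{k_1+k_2-2} \log^2 n)$. -/
/-!
Write `K = k₁ - 2`, `L = k₂ - 2`. Gauss's identity `gcd i j = ∑_{d ∣ gcd i j} φ d` turns the sum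
into `∑_d φ d · d^(K+L) · ∑_{1 ≤ a < b ≤ n/d} a^K b^L`, and comparing power sums with
`∫ x^K dx` bounds the inner sum by `(n/d)^(K+L+2) / (K+1)`. As `φ d ≤ d`, the whole sum is at most
`n^(K+L+2) / (K+1) · H_n`. The same integral comparison, now from below, shows that the stated
double sum is at least this quantity, and `H_n ≤ 1 + log n` gives the `O(n^(K+L+2) log² n)` bound.
-/

open Finset

lemma sum_range_pow_le (K b : ℕ) : ∑ a ∈ range b, (a : ℝ) ^ K ≤ (b : ℝ) ^ (K + 1) / (K + 1) := by
  have hmono : MonotoneOn (fun x : ℝ => x ^ K) (Set.Icc 0 (0 + b)) := fun x hx y _ hxy =>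
    pow_le_pow_left₀ hx.1 hxy K
  simpa [integral_pow] using hmono.sum_le_integral

lemma div_le_sum_Icc_pow (K b : ℕ) : (b : ℝ) ^ (K + 1) / (K + 1) ≤ ∑ a ∈ Icc 1 b, (a : ℝ) ^ K := by
  have hmono : MonotoneOn (fun x : ℝ => x ^ K) (Set.Icc 0 (0 + b)) := fun x hx y _ hxy =>
    pow_le_pow_left₀ hx.1 hxy K
  rw [← Ico_add_one_right_eq_Icc, ← sum_Ico_add' (fun a : ℕ => (a : ℝ) ^ K) 0 b 1, ← range_eq_Ico]
  simpa [integral_pow] using hmono.integral_le_sum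

lemma sum_sum_pow_mul_pow_le (K L m : ℕ) :
    ∑ a ∈ Icc 1 m, ∑ b ∈ Ioc a m, (a : ℝ) ^ K * (b : ℝ) ^ L ≤ (m : ℝ) ^ (K + L + 2) / (K + 1) := by
  rw [sum_comm' (t' := Icc 1 m) (s' := fun b => Ico 1 b) (fun a b => by
    simp only [mem_Icc, mem_Ioc, mem_Ico]; omega)]
  calc _ ≤ ∑ b ∈ Icc 1 m, (b : ℝ) ^ (K + L + 1) / (K + 1) := by
        refine sum_le_sum fun b _ => ?_
        have hsum : ∑ a ∈ Ico 1 b, (a : ℝ) ^ K ≤ (b : ℝ) ^ (K + 1) / (K + 1) :=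
          (sum_le_sum_of_subset_of_nonneg (fun a ha => mem_range.2 (mem_Ico.1 ha).2)
            fun a _ _ => by positivity).trans (sum_range_pow_le K b)
        calc _ = (∑ a ∈ Ico 1 b, (a : ℝ) ^ K) * (b : ℝ) ^ L := sum_mul .. |>.symm
          _ ≤ (b : ℝ) ^ (K + 1) / (K + 1) * (b : ℝ) ^ L := by gcongr
          _ = _ := by ring
    _ ≤ ∑ b ∈ Icc 1 m, (m : ℝ) ^ (K + L + 1) / (K + 1) := by
        refine sum_le_sum fun b hb => ?_
        have hbm : (b : ℝ) ≤ m := by exact_mod_cast (mem_Icc.1 hb).2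
        gcongr
    _ = _ := by
        simp only [sum_const, Nat.card_Icc, add_tsub_cancel_right, nsmul_eq_mul]
        ring

lemma sum_Ioc_filter_dvd {M : Type*} [AddCommMonoid M] {d : ℕ} (hd : 0 < d) (a n : ℕ)
    (f : ℕ → M) : ∑ j ∈ Ioc (d * a) n with d ∣ j, f j = ∑ b ∈ Ioc a (n / d), f (d * b) := by
  rw [← sum_image (fun x _ y _ h => Nat.eq_of_mul_eq_mul_left hd h)]
  congr 1
  ext j
  simp only [mem_filter, mem_Ioc, mem_image]
  constructor
  · rintro ⟨⟨hlt, hle⟩, b, rfl⟩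
    exact ⟨b, ⟨Nat.lt_of_mul_lt_mul_left hlt, (Nat.le_div_iff_mul_le hd).2 (by linarith)⟩, rfl⟩
  · rintro ⟨b, ⟨hab, hbn⟩, rfl⟩
    refine ⟨⟨Nat.mul_lt_mul_of_pos_left hab hd, ?_⟩, dvd_mul_right d b⟩
    have := (Nat.le_div_iff_mul_le hd).1 hbn
    linarith

lemma natCast_gcd_eq_sum_totient {R : Type*} [Semiring R] {i n : ℕ} (hi : 0 < i) (hin : i ≤ n)
    (j : ℕ) : (i.gcd j : R) = ∑ d ∈ Icc 1 n with d ∣ i ∧ d ∣ j, (d.totient : R) := by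
  have hdiv : {d ∈ Icc 1 n | d ∣ i ∧ d ∣ j} = (i.gcd j).divisors := by
    ext d
    simp only [mem_filter, mem_Icc, Nat.mem_divisors, Nat.dvd_gcd_iff]
    constructor
    · exact fun h => ⟨h.2, Nat.gcd_ne_zero_left hi.ne'⟩
    · rintro ⟨⟨hdi, hdj⟩, -⟩
      exact ⟨⟨Nat.pos_of_dvd_of_pos hdi hi, (Nat.le_of_dvd hi hdi).trans hin⟩, hdi, hdj⟩
  rw [hdiv, ← Nat.cast_sum, Nat.sum_totient]

lemma sum_sum_mul_gcd_eq {R : Type*} [CommSemiring R] (n : ℕ) (f : ℕ → ℕ → R) :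
    ∑ i ∈ Icc 1 n, ∑ j ∈ Ioc i n, f i j * (i.gcd j : R) =
      ∑ d ∈ Icc 1 n, (d.totient : R) *
        ∑ a ∈ Icc 1 (n / d), ∑ b ∈ Ioc a (n / d), f (d * a) (d * b) := by
  calc _ = ∑ i ∈ Icc 1 n, ∑ j ∈ Ioc i n, ∑ d ∈ Icc 1 n,
        if d ∣ i then (if d ∣ j then (d.totient : R) * f i j else 0) else 0 := by
        refine sum_congr rfl fun i hi => sum_congr rfl fun j _ => ?_
        rw [mem_Icc] at hi
        rw [natCast_gcd_eq_sum_totient hi.1 hi.2 j, mul_sum, sum_filter]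
        refine sum_congr rfl fun d _ => ?_
        split_ifs <;> simp_all [mul_comm]
    _ = ∑ d ∈ Icc 1 n, ∑ i ∈ Icc 1 n, ∑ j ∈ Ioc i n,
        if d ∣ i then (if d ∣ j then (d.totient : R) * f i j else 0) else 0 := by
        rw [← sum_comm]
        exact sum_congr rfl fun i _ => sum_comm
    _ = ∑ d ∈ Icc 1 n, (d.totient : R) *
        ∑ i ∈ Icc 1 n with d ∣ i, ∑ j ∈ Ioc i n with d ∣ j, f i j := by
        refine sum_congr rfl fun d _ => ?_
        simp_rw [sum_filter, mul_sum]
        refine sum_congr rfl fun i _ => ?_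
        split_ifs <;> simp [mul_sum]
    _ = _ := by
        refine sum_congr rfl fun d hd => ?_
        have hd0 : 0 < d := (mem_Icc.1 hd).1
        have hIcc (m : ℕ) : Icc 1 m = Ioc (d * 0) m := by
          rw [mul_zero]; exact Icc_add_one_left_eq_Ioc 0 m
        rw [hIcc n, hIcc (n / d), sum_Ioc_filter_dvd hd0]
        exact congrArg _ (sum_congr rfl fun a _ => sum_Ioc_filter_dvd hd0 a n _)

lemma sum_sum_pow_mul_pow_mul_gcd_le (K L n : ℕ) :
    ∑ i ∈ Icc 1 n, ∑ j ∈ Ioc i n, (i : ℝ) ^ K * (j : ℝ) ^ L * (i.gcd j : ℝ) ≤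
      (n : ℝ) ^ (K + L + 2) / (K + 1) * ∑ d ∈ Icc 1 n, (d : ℝ)⁻¹ := by
  rw [sum_sum_mul_gcd_eq n (fun i j => (i : ℝ) ^ K * (j : ℝ) ^ L), mul_sum]
  refine sum_le_sum fun d hd => ?_
  have hd : (0 : ℝ) < d := by exact_mod_cast (mem_Icc.1 hd).1
  have hdm : (d : ℝ) * (n / d : ℕ) ≤ n := by exact_mod_cast Nat.mul_div_le n d
  have hscale : ∑ a ∈ Icc 1 (n / d), ∑ b ∈ Ioc a (n / d),
      ((d * a : ℕ) : ℝ) ^ K * ((d * b : ℕ) : ℝ) ^ L =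
      (d : ℝ) ^ (K + L) * ∑ a ∈ Icc 1 (n / d), ∑ b ∈ Ioc a (n / d), (a : ℝ) ^ K * (b : ℝ) ^ L := by
    simp_rw [mul_sum]
    exact sum_congr rfl fun a _ => sum_congr rfl fun b _ => by push_cast; ring
  calc _ = (d.totient : ℝ) * ((d : ℝ) ^ (K + L) *
        ∑ a ∈ Icc 1 (n / d), ∑ b ∈ Ioc a (n / d), (a : ℝ) ^ K * (b : ℝ) ^ L) := by rw [hscale]
    _ ≤ d * ((d : ℝ) ^ (K + L) * ((n / d : ℕ) ^ (K + L + 2) / (K + 1))) := by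
        gcongr
        · exact_mod_cast Nat.totient_le d
        · exact sum_sum_pow_mul_pow_le K L _
    _ = ((d : ℝ) * (n / d : ℕ)) ^ (K + L + 2) / (K + 1) * (d : ℝ)⁻¹ := by
        field_simp; ring
    _ ≤ _ := by gcongr

lemma div_mul_sum_inv_le_sum_sum (K n : ℕ) {c : ℝ} (hc : 0 ≤ c) :
    c / (K + 1) * ∑ d ∈ Icc 1 n, (d : ℝ)⁻¹ ≤
      ∑ i ∈ Icc 1 n, ∑ j ∈ Icc i n, c * ((i : ℝ) ^ K / (j : ℝ) ^ (K + 2)) := by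
  rw [sum_comm' (t' := Icc 1 n) (s' := fun j => Icc 1 j) (fun i j => by
    simp only [mem_Icc]; omega), mul_sum]
  refine sum_le_sum fun j hj => ?_
  have hj : (0 : ℝ) < j := by exact_mod_cast (mem_Icc.1 hj).1
  rw [← mul_sum, ← sum_div]
  calc _ = c * ((j : ℝ) ^ (K + 1) / (K + 1) / (j : ℝ) ^ (K + 2)) := by field_simp; ring
    _ ≤ _ := by gcongr; exact div_le_sum_Icc_pow K j

theorem stmt_6 (k₁ k₂ : ℕ) (hk₁ : 2 ≤ k₁) (hk₂ : 2 ≤ k₂) :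
    (∀ n : ℕ, 2 ≤ n →
      ∑ i ∈ Finset.Icc 1 n, ∑ j ∈ Finset.Ioc i n,
          (i : ℝ) ^ (k₁ - 2) * (j : ℝ) ^ (k₂ - 2) * (Nat.gcd i j : ℝ) ≤
        ∑ i ∈ Finset.Icc 1 n, ∑ j ∈ Finset.Icc i n,
          (n : ℝ) ^ (k₁ + k₂ - 2) * ((i : ℝ) ^ (k₁ - 2) / (j : ℝ) ^ k₁)) ∧
    ∃ C : ℝ, ∀ n : ℕ, 2 ≤ n →
      ∑ i ∈ Finset.Icc 1 n, ∑ j ∈ Finset.Ioc i n,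
          (i : ℝ) ^ (k₁ - 2) * (j : ℝ) ^ (k₂ - 2) * (Nat.gcd i j : ℝ) ≤
        C * (n : ℝ) ^ (k₁ + k₂ - 2) * (Real.log n) ^ 2 := by
  obtain ⟨K, rfl⟩ : ∃ K, k₁ = K + 2 := ⟨k₁ - 2, by omega⟩
  obtain ⟨L, rfl⟩ : ∃ L, k₂ = L + 2 := ⟨k₂ - 2, by omega⟩
  rw [show K + 2 + (L + 2) - 2 = K + L + 2 by omega]
  simp only [Nat.add_sub_cancel]
  refine ⟨fun n _ => (sum_sum_pow_mul_pow_mul_gcd_le K L n).trans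
    (div_mul_sum_inv_le_sum_sum K n (by positivity)), 4, fun n hn => ?_⟩
  have hlog : Real.log 2 ≤ Real.log n := Real.log_le_log (by norm_num) (by exact_mod_cast hn)
  have harmonic_le : ∑ d ∈ Icc 1 n, (d : ℝ)⁻¹ ≤ 1 + Real.log n := by
    simpa [harmonic_eq_sum_Icc] using harmonic_le_one_add_log n
  calc _ ≤ (n : ℝ) ^ (K + L + 2) / (K + 1) * ∑ d ∈ Icc 1 n, (d : ℝ)⁻¹ :=
        sum_sum_pow_mul_pow_mul_gcd_le K L n
    _ ≤ (n : ℝ) ^ (K + L + 2) * (1 + Real.log n) := by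
        gcongr
        exact div_le_self (by positivity) (by linarith [(K.cast_nonneg : (0 : ℝ) ≤ K)])
    _ ≤ (n : ℝ) ^ (K + L + 2) * (4 * Real.log n ^ 2) := by
        gcongr
        nlinarith [Real.log_two_gt_d9]
    _ = _ := by ring
end

section
/- Define $K(z) = \frac{3}{2} - \frac{1}{2}\left(1 - \frac{1}{z}\right)^2 \log(1-z) - \frac{1}{2}\left(1 + \frac{1}{z}\right)^2 \log(1+z)$ for complex $|z| < 1$, $z \neq 0$. Then $K$ agrees on $\{0 < |z| < 1\}$ with the power series $\sum_{m=1}^\infty \frac{2}{2m(2m+1)(2m+2)} z^{2m}$; equivalently, $(z^2 K(z))''' = \frac{2z}{1-z^2}$ and $K(z) \to 0$ as $z \to 0$. -/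
/-!
Partial fractions give `2 / (n (n+1) (n+2)) = 1/n - 2/(n+1) + 1/(n+2)`, so multiplying the series
`-log (1 - w) = ∑ wⁿ/n` by `(1 - 1/w)² = 1 - 2/w + 1/w²` yields `∑ 2 wⁿ / (n (n+1) (n+2))` up to the
terms `1/w - 3/2` coming from the first summands. `K z` is the average of the resulting identity at
`z` and `-z`, which removes the odd powers and the `1/w` term.
-/

open Complex

noncomputable def Kfun (z : ℂ) : ℂ :=
  3 / 2 - (1 / 2) * (1 - 1 / z) ^ 2 * Complex.log (1 - z)
    - (1 / 2) * (1 + 1 / z) ^ 2 * Complex.log (1 + z)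

theorem HasSum.even_powers {𝕜 : Type*} [Field 𝕜] [CharZero 𝕜] [TopologicalSpace 𝕜]
    [IsTopologicalRing 𝕜] {c : ℕ → 𝕜} {z a b : 𝕜}
    (ha : HasSum (fun n ↦ c n * z ^ (n + 1)) a) (hb : HasSum (fun n ↦ c n * (-z) ^ (n + 1)) b) :
    HasSum (fun m ↦ c (2 * m + 1) * z ^ (2 * m + 2)) ((a + b) / 2) := by
  have hinj : Function.Injective (fun m : ℕ ↦ 2 * m + 1) := fun m k h ↦ by simp only at h; omega
  have hvanish : ∀ n ∉ Set.range (fun m : ℕ ↦ 2 * m + 1),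
      (c n * z ^ (n + 1) + c n * (-z) ^ (n + 1)) / 2 = 0 := by
    intro n hn
    obtain ⟨m, rfl⟩ | ⟨m, rfl⟩ := n.even_or_odd
    · rw [Odd.neg_pow ⟨m, by ring⟩]
      ring
    · exact absurd ⟨m, rfl⟩ hn
  convert (hinj.hasSum_iff hvanish).mpr ((ha.add hb).div_const 2) using 1
  funext m
  have heven : Even (2 * m + 1 + 1) := ⟨m + 1, by ring⟩
  simp only [Function.comp_apply, heven.neg_pow]
  ring

theorem Complex.hasSum_taylorSeries_one_sub_inv_sq_mul_log {w : ℂ} (hw : ‖w‖ < 1) (hw0 : w ≠ 0) :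
    HasSum (fun n : ℕ ↦ 2 / ((n + 1) * (n + 2) * (n + 3)) * w ^ (n + 1))
      (3 / 2 - 1 / w - (1 - 1 / w) ^ 2 * log (1 - w)) := by
  have hlog := hasSum_taylorSeries_neg_log hw
  have hshift : ∀ k, HasSum (fun n : ℕ ↦ w ^ (n + k) / (n + k : ℂ))
      (-log (1 - w) - ∑ i ∈ Finset.range k, w ^ i / i) := fun k ↦ by
    exact_mod_cast (hasSum_nat_add_iff' k).mpr hlog
  have hsum := ((hshift 1).sub ((hshift 2).mul_left (2 / w))).add ((hshift 3).mul_left (1 / w ^ 2))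
  simp only [Nat.cast_one, Nat.cast_ofNat] at hsum
  have hterm : ∀ n : ℕ, 2 / ((n + 1) * (n + 2) * (n + 3)) * w ^ (n + 1) =
      w ^ (n + 1) / (n + 1 : ℂ) - 2 / w * (w ^ (n + 2) / (n + 2 : ℂ))
        + 1 / w ^ 2 * (w ^ (n + 3) / (n + 3 : ℂ)) := fun n ↦ by
    have : (n + 1 : ℂ) ≠ 0 := by norm_cast
    have : (n + 2 : ℂ) ≠ 0 := by norm_cast
    have : (n + 3 : ℂ) ≠ 0 := by norm_cast
    field_simp
    ring
  have hvalue : 3 / 2 - 1 / w - (1 - 1 / w) ^ 2 * log (1 - w) =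
      -log (1 - w) - ∑ i ∈ Finset.range 1, w ^ i / i
        - 2 / w * (-log (1 - w) - ∑ i ∈ Finset.range 2, w ^ i / i)
        + 1 / w ^ 2 * (-log (1 - w) - ∑ i ∈ Finset.range 3, w ^ i / i) := by
    simp only [Finset.sum_range_succ, Finset.sum_range_zero]
    field_simp
    ring
  rw [hvalue]
  exact hsum.congr_fun hterm

theorem stmt_18 (z : ℂ) (hz : ‖z‖ < 1) (hz0 : z ≠ 0) :
    Kfun z = ∑' m : ℕ,
      (2 / ((2 * (m + 1)) * (2 * m + 3) * (2 * m + 4)) : ℂ) * z ^ (2 * (m + 1)) := by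
  have hsum := HasSum.even_powers (hasSum_taylorSeries_one_sub_inv_sq_mul_log hz hz0)
    (hasSum_taylorSeries_one_sub_inv_sq_mul_log (by rwa [norm_neg]) (neg_ne_zero.mpr hz0))
  convert hsum.tsum_eq.symm using 1
  · simp only [Kfun, sub_neg_eq_add, one_div, inv_neg]
    ring
  · congr 1
    funext m
    push_cast
    ring
end
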